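/- arXiv:2601.19999 — 4 statements merged into one kernel-verified Lean document; each statement's English description precedes it below -/
import Mathlib

section
/- If there exists a bowtie of functions, then there exists a nontrivial automorphism of the Boolean algebra P(ω)/Fin. -/
/-!
Extend each `f α` by the identity off `D α` to a permutation `perm α` of `ℕ` and put
`phi A = perm (delta A) '' A`, where `delta A` is the witness `δ_A` of (iii). By coherence (ii)
and (iii), `perm γ '' A =* phi A` for every `γ ≥ delta A`, so finitely many sets can be compared
at a common level, where `phi` is the image under a single permutation; hence `phi` induces an
automorphism of `P(ω)/Fin`.

Suppose `phi` were induced by an almost permutation `h`. Then `h` agrees with `f α` at almost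
every point of `D α`: otherwise a 3-colouring yields an infinite `A ⊆ D α` with `f α '' A` and
`h '' A` disjoint, although both are `=* phi A`. By Katětov's three-set lemma the points moved
by `h` split into three sets `Aᵢ` with `h '' Aᵢ` disjoint from `Aᵢ`; by (iii), each `Aᵢ` meets
`D α \ D β` in a finite set once `β ≥ delta Aᵢ`. But for `α > β` the infinite set `D α \ D β`
is almost entirely moved by `f α`, hence by `h`.
-/

open Set

/-- The first uncountable ordinal `ω₁`. -/
noncomputable def omega1 : Ordinal := (Cardinal.aleph 1).ord

/-- `A =* B` : the symmetric difference `(A \ B) ∪ (B \ A)` is finite. -/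
def EqStar (A B : Set ℕ) : Prop := ((A \ B) ∪ (B \ A)).Finite

/-- `A ⊆* B` : `A \ B` is finite. -/
def SubStar (A B : Set ℕ) : Prop := (A \ B).Finite

/-- A bowtie of functions: a sequence `⟨f_α : α < ω₁⟩` where each `f_α` is a
fixed-point-free permutation of a set `D_α ⊆ ℕ`, satisfying conditions
(i), (ii), (iii) of the definition.  (The functions are represented as total
functions on `ℕ`; only their behavior on `D_α` matters.) -/
structure BowtieFn where
  /-- the domains `D_α` -/
  D : Ordinal → Set ℕ
  /-- the functions `f_α` (total functions; only values on `D α` matter) -/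
  f : Ordinal → ℕ → ℕ
  /-- each `f_α` is a permutation of `D_α` -/
  bijOn : ∀ α < omega1, Set.BijOn (f α) (D α) (D α)
  /-- each `f_α` is fixed-point-free on `D_α` -/
  fixedPointFree : ∀ α < omega1, ∀ x ∈ D α, f α x ≠ x
  /-- (i) `D_α ⊆* D_β` for `α < β < ω₁` -/
  sub : ∀ α β, α < β → β < omega1 → SubStar (D α) (D β)
  /-- (i) `D_β \ D_α` is infinite for `α < β < ω₁` -/
  diff_infinite : ∀ α β, α < β → β < omega1 → (D β \ D α).Infinite
  /-- (ii) `f_α =* f_β ↾ D_α` for `α ≤ β < ω₁` -/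
  coherent : ∀ α β, α ≤ β → β < omega1 → {x ∈ D α | f α x ≠ f β x}.Finite
  /-- (iii) every `A ⊆ ℕ` has a witness `δ_A < ω₁` -/
  guess : ∀ A : Set ℕ, ∃ δ, δ < omega1 ∧ ∀ α, δ ≤ α → α < omega1 →
      EqStar (f α '' ((D α \ D δ) ∩ A)) ((D α \ D δ) ∩ A) ∧
      EqStar (f α '' ((D α \ D δ) \ A)) ((D α \ D δ) \ A)

/-- An automorphism of the Boolean algebra `P(ω)/Fin`, represented by a lifting
`Φ : Set ℕ → Set ℕ` acting on representatives: `Φ` is well defined, injective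
and surjective modulo finite sets, and preserves the Boolean operations modulo
finite sets. -/
structure PωFinAuto where
  /-- the action on representatives -/
  Φ : Set ℕ → Set ℕ
  /-- well-definedness on `=*`-classes -/
  congr : ∀ A B : Set ℕ, EqStar A B → EqStar (Φ A) (Φ B)
  /-- injectivity on `=*`-classes -/
  inj : ∀ A B : Set ℕ, EqStar (Φ A) (Φ B) → EqStar A B
  /-- surjectivity on `=*`-classes -/
  surj : ∀ B : Set ℕ, ∃ A : Set ℕ, EqStar (Φ A) B
  /-- preservation of unions -/
  map_union : ∀ A B : Set ℕ, EqStar (Φ (A ∪ B)) (Φ A ∪ Φ B)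
  /-- preservation of complements -/
  map_compl : ∀ A : Set ℕ, EqStar (Φ Aᶜ) (Φ A)ᶜ

/-- A map on representatives induces a *trivial* automorphism of `P(ω)/Fin` if
there is an almost permutation `h` of `ℕ` (an injection on a cofinite set `dom`
whose image is cofinite) with `Φ A =* h[A ∩ dom]` for all `A`. -/
def IsTrivial (Φ : Set ℕ → Set ℕ) : Prop :=
  ∃ (h : ℕ → ℕ) (dom : Set ℕ), (domᶜ : Set ℕ).Finite ∧
    ((h '' dom)ᶜ : Set ℕ).Finite ∧ Set.InjOn h dom ∧
    ∀ A : Set ℕ, EqStar (Φ A) (h '' (A ∩ dom))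

open Filter Function

open scoped symmDiff

section Cofinite

variable {α β : Type*}

theorem eventuallyEq_cofinite_iff_finite_symmDiff {s t : Set α} :
    s =ᶠ[cofinite] t ↔ (s ∆ t).Finite := by
  rw [eventuallyEq_set, eventually_cofinite]
  congr!
  ext x
  simp only [mem_ofPred_eq, mem_symmDiff]
  tauto

theorem eqStar_iff_eventuallyEq {A B : Set ℕ} : EqStar A B ↔ A =ᶠ[cofinite] B := by
  rw [eventuallyEq_cofinite_iff_finite_symmDiff]
  rfl

theorem Function.Injective.image_eventuallyEq_cofinite_iff {f : α → β} (hf : Injective f)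
    {s t : Set α} : f '' s =ᶠ[cofinite] f '' t ↔ s =ᶠ[cofinite] t := by
  simp only [eventuallyEq_cofinite_iff_finite_symmDiff, ← image_symmDiff hf,
    finite_image_iff hf.injOn]

theorem image_eventuallyEq_cofinite_of_eventually_eq {f g : α → β} {s : Set α}
    (h : ∀ᶠ x in cofinite, x ∈ s → f x = g x) : f '' s =ᶠ[cofinite] g '' s := by
  have hfin := eventually_cofinite.mp h
  refine eventuallyEq_cofinite_iff_finite_symmDiff.mpr ((hfin.image f).union (hfin.image g)
    |>.subset ?_)
  rintro y (⟨⟨x, hx, rfl⟩, hy⟩ | ⟨⟨x, hx, rfl⟩, hy⟩)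
  · exact Or.inl ⟨x, fun hfg => hy ⟨x, hx, (hfg hx).symm⟩, rfl⟩
  · exact Or.inr ⟨x, fun hfg => hy ⟨x, hx, hfg hx⟩, rfl⟩

theorem Filter.EventuallyEq.finite_of_disjoint {s t : Set α} (h : s =ᶠ[cofinite] t)
    (hst : Disjoint s t) : s.Finite :=
  (eventuallyEq_cofinite_iff_finite_symmDiff.mp h).subset fun _ hx =>
    Or.inl ⟨hx, hst.notMem_of_mem_left hx⟩

theorem image_inter_eventuallyEq_image {f : α → β} {t : Set α} (ht : tᶜ.Finite) (s : Set α) :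
    f '' (s ∩ t) =ᶠ[cofinite] f '' s :=
  eventuallyEq_cofinite_iff_finite_symmDiff.mpr <| (ht.image f).subset <| by
    rintro _ (⟨⟨x, hx, rfl⟩, hy⟩ | ⟨⟨x, hx, rfl⟩, hy⟩)
    · exact absurd ⟨x, hx.1, rfl⟩ hy
    · exact ⟨x, fun hxt => hy ⟨x, ⟨hx, hxt⟩, rfl⟩, rfl⟩

end Cofinite

namespace SimpleGraph

variable (G : SimpleGraph ℕ)

noncomputable def greedyColoring : ℕ → ℕ
  | n => sInf {c | ∀ m, (_ : m < n) → G.Adj m n → greedyColoring m ≠ c}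

theorem greedyColoring_ne_of_lt_of_adj {m n : ℕ} (hmn : m < n) (hadj : G.Adj m n) :
    G.greedyColoring m ≠ G.greedyColoring n := by
  have hmem : G.greedyColoring n ∈
      {c | ∀ m, (_ : m < n) → G.Adj m n → G.greedyColoring m ≠ c} := by
    rw [greedyColoring]
    refine Nat.sInf_mem ?_
    obtain ⟨c, hc⟩ := ((finite_Iio n).image G.greedyColoring).infinite_compl.nonempty
    exact ⟨c, fun m hm _ hmc => hc ⟨m, hm, hmc⟩⟩
  exact hmem m hmn hadj

theorem greedyColoring_le {n k : ℕ} (h : {m | m < n ∧ G.Adj m n}.encard ≤ k) :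
    G.greedyColoring n ≤ k := by
  set forbidden := G.greedyColoring '' {m | m < n ∧ G.Adj m n}
  obtain ⟨c, hck, hc⟩ : ∃ c ≤ k, c ∉ forbidden := by
    by_contra! hall
    have : ((k + 1 : ℕ) : ℕ∞) ≤ k := calc
      ((k + 1 : ℕ) : ℕ∞) = (Iio (k + 1)).encard := by
        rw [← (finite_Iio _).cast_ncard_eq, ncard_Iio_nat]
      _ ≤ forbidden.encard := encard_le_encard fun c hc => hall c (Nat.lt_succ_iff.mp hc)
      _ ≤ k := (encard_image_le _ _).trans h
    norm_cast at this
    omega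
  rw [greedyColoring]
  refine (Nat.sInf_le ?_).trans hck
  exact fun m hm hadj hmc => hc ⟨m, ⟨hm, hadj⟩, hmc⟩

theorem colorable_succ_of_encard_lower_neighbors_le (k : ℕ)
    (h : ∀ n, {m | m < n ∧ G.Adj m n}.encard ≤ k) : G.Colorable (k + 1) := by
  refine (G.colorable_iff_exists_bdd_nat_coloring _).mpr
    ⟨Coloring.mk G.greedyColoring fun {m n} hadj => ?_,
      fun n => Nat.lt_succ_of_le (G.greedyColoring_le (h n))⟩
  rcases (G.ne_of_adj hadj).lt_or_gt with hmn | hnm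
  · exact G.greedyColoring_ne_of_lt_of_adj hmn hadj
  · exact (G.greedyColoring_ne_of_lt_of_adj hnm hadj.symm).symm

theorem fromRel_colorable_three {R : ℕ → ℕ → Prop}
    (hsucc : ∀ x, {y | R x y}.Subsingleton) (hpred : ∀ y, {x | R x y}.Subsingleton) :
    (fromRel R).Colorable 3 := by
  refine colorable_succ_of_encard_lower_neighbors_le _ 2 fun n => ?_
  calc {m | m < n ∧ (fromRel R).Adj m n}.encard
      ≤ ({m | R n m} ∪ {m | R m n}).encard :=
        encard_le_encard fun m ⟨_, _, hR⟩ => hR.symm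
    _ ≤ 1 + 1 := (encard_union_le _ _).trans (add_le_add
        (encard_le_one_iff_subsingleton.mpr (hsucc n))
        (encard_le_one_iff_subsingleton.mpr (hpred n)))
    _ = 2 := by norm_num

end SimpleGraph

theorem exists_infinite_subset_disjoint_image {f h : ℕ → ℕ} {S : Set ℕ} (hS : S.Infinite)
    (hf : InjOn f S) (hh : InjOn h S) (hne : ∀ x ∈ S, f x ≠ h x) :
    ∃ A ⊆ S, A.Infinite ∧ Disjoint (f '' A) (h '' A) := by
  obtain ⟨C⟩ := SimpleGraph.fromRel_colorable_three (R := fun x y => x ∈ S ∧ y ∈ S ∧ f x = h y)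
    (fun _ _ hy _ hz => hh hy.2.1 hz.2.1 (hy.2.2.symm.trans hz.2.2))
    (fun _ _ hx _ hz => hf hx.1 hz.1 (hx.2.2.trans hz.2.2.symm))
  obtain ⟨i, hi⟩ : ∃ i, (S ∩ C.colorClass i).Infinite := by
    by_contra! hfin
    exact hS ((finite_iUnion hfin).subset fun x hx => mem_iUnion.mpr ⟨C x, hx, rfl⟩)
  refine ⟨_, inter_subset_left, hi, disjoint_left.mpr ?_⟩
  rintro _ ⟨x, hx, rfl⟩ ⟨y, hy, hyx⟩
  have hxy : x ≠ y := fun hxy => hne x hx.1 (hxy ▸ hyx.symm)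
  exact C.valid ⟨hxy, Or.inl ⟨hx.1, hy.1, hyx.symm⟩⟩ (hx.2.trans hy.2.symm)

theorem exists_fin_three_cover_disjoint_image {h : ℕ → ℕ} {W : Set ℕ} (hinj : InjOn h W)
    (hmoved : ∀ x ∈ W, h x ≠ x) :
    ∃ A : Fin 3 → Set ℕ, W ⊆ ⋃ i, A i ∧ ∀ i, Disjoint (h '' A i) (A i) := by
  obtain ⟨C⟩ := SimpleGraph.fromRel_colorable_three (R := fun x y => x ∈ W ∧ h x = y)
    (fun _ _ hy _ hz => hy.2.symm.trans hz.2)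
    (fun _ _ hx _ hz => hinj hx.1 hz.1 (hx.2.trans hz.2.symm))
  refine ⟨fun i => W ∩ C.colorClass i, fun x hx => mem_iUnion.mpr ⟨C x, hx, rfl⟩,
    fun i => disjoint_left.mpr ?_⟩
  rintro _ ⟨x, hx, rfl⟩ hhx
  exact C.valid ⟨(hmoved x hx.1).symm, Or.inl ⟨hx.1, rfl⟩⟩ (hx.2.trans hhx.2.symm)

namespace BowtieFn

variable (T : BowtieFn) {α γ : Ordinal} {A B X : Set ℕ}

open Classical in
noncomputable def perm (α : Ordinal) (x : ℕ) : ℕ := if x ∈ T.D α then T.f α x else x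

noncomputable def delta_s0 (A : Set ℕ) : Ordinal := (T.guess A).choose

noncomputable def phi (A : Set ℕ) : Set ℕ := T.perm (T.delta_s0 A) '' A

theorem delta_lt (A : Set ℕ) : T.delta_s0 A < omega1 := (T.guess A).choose_spec.1

theorem image_f_delta_eventuallyEq (hγ : T.delta_s0 A ≤ γ) (hγ₁ : γ < omega1) :
    T.f γ '' ((T.D γ \ T.D (T.delta_s0 A)) ∩ A) =ᶠ[cofinite] ((T.D γ \ T.D (T.delta_s0 A)) ∩ A : Set ℕ) :=
  eqStar_iff_eventuallyEq.mp ((T.guess A).choose_spec.2 γ hγ hγ₁).1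

theorem perm_of_mem {x : ℕ} (hx : x ∈ T.D α) : T.perm α x = T.f α x := if_pos hx

theorem perm_of_notMem {x : ℕ} (hx : x ∉ T.D α) : T.perm α x = x := if_neg hx

theorem perm_bijective (hα : α < omega1) : Bijective (T.perm α) := by
  have hbij := T.bijOn α hα
  constructor
  · intro x y hxy
    by_cases hx : x ∈ T.D α <;> by_cases hy : y ∈ T.D α <;>
      simp only [T.perm_of_mem, T.perm_of_notMem, hx, hy, not_false_eq_true] at hxy
    · exact hbij.injOn hx hy hxy
    · exact absurd (hxy ▸ hbij.mapsTo hx) hy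
    · exact absurd (hxy ▸ hbij.mapsTo hy) hx
    · exact hxy
  · intro y
    by_cases hy : y ∈ T.D α
    · obtain ⟨x, hx, rfl⟩ := hbij.surjOn hy
      exact ⟨x, T.perm_of_mem hx⟩
    · exact ⟨y, T.perm_of_notMem hy⟩

theorem image_perm_of_subset (hX : X ⊆ T.D α) : T.perm α '' X = T.f α '' X :=
  image_congr fun _ hx => T.perm_of_mem (hX hx)

theorem image_perm_sdiff (X : Set ℕ) : T.perm α '' (X \ T.D α) = X \ T.D α :=
  (image_congr fun _ hx => T.perm_of_notMem hx.2).trans (image_id _)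

theorem preimage_perm_sdiff (B : Set ℕ) : T.perm α ⁻¹' B \ T.D α = B \ T.D α := by
  ext x
  simp +contextual only [Set.mem_sdiff, mem_preimage, and_congr_left_iff, T.perm_of_notMem,
    not_false_eq_true, implies_true]

theorem eventually_mem_of_le (hαγ : α ≤ γ) (hγ : γ < omega1) :
    ∀ᶠ x in cofinite, x ∈ T.D α → x ∈ T.D γ := by
  rcases hαγ.eq_or_lt with rfl | hlt
  · exact Eventually.of_forall fun _ => id
  · filter_upwards [(T.sub α γ hlt hγ).eventually_cofinite_notMem] with x hx hxα
    by_contra hxγ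
    exact hx ⟨hxα, hxγ⟩

theorem eventually_perm_eq (hαγ : α ≤ γ) (hγ : γ < omega1) :
    ∀ᶠ x in cofinite, x ∈ T.D α → T.perm γ x = T.perm α x := by
  filter_upwards [T.eventually_mem_of_le hαγ hγ,
    (T.coherent α γ hαγ hγ).eventually_cofinite_notMem] with x hsub hcoh hxα
  rw [T.perm_of_mem hxα, T.perm_of_mem (hsub hxα)]
  by_contra hne
  exact hcoh ⟨hxα, Ne.symm hne⟩

theorem image_perm_eventuallyEq_of_subset (hαγ : α ≤ γ) (hγ : γ < omega1)
    (hX : X ⊆ T.D α) : T.perm γ '' X =ᶠ[cofinite] T.perm α '' X :=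
  image_eventuallyEq_cofinite_of_eventually_eq <|
    (T.eventually_perm_eq hαγ hγ).mono fun _ h hx => h (hX hx)

theorem image_perm_eventuallyEq (hαγ : α ≤ γ) (hγ : γ < omega1)
    (hX : T.perm γ '' (X \ T.D α) =ᶠ[cofinite] (X \ T.D α : Set ℕ)) :
    T.perm γ '' X =ᶠ[cofinite] T.perm α '' X := by
  rw [← inter_union_sdiff X (T.D α), image_union, image_union, T.image_perm_sdiff]
  exact (T.image_perm_eventuallyEq_of_subset hαγ hγ inter_subset_right).union hX

theorem image_perm_sdiff_delta_eventuallyEq (hγ : T.delta_s0 A ≤ γ) (hγ₁ : γ < omega1) :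
    T.perm γ '' (A \ T.D (T.delta_s0 A)) =ᶠ[cofinite] (A \ T.D (T.delta_s0 A) : Set ℕ) := by
  have hsplit : A \ T.D (T.delta_s0 A) =
      (T.D γ \ T.D (T.delta_s0 A)) ∩ A ∪ (A \ T.D (T.delta_s0 A)) \ T.D γ := by
    ext x
    simp only [mem_union, mem_inter_iff, Set.mem_sdiff]
    tauto
  conv_lhs => rw [hsplit, image_union, T.image_perm_sdiff,
    T.image_perm_of_subset fun _ hx => hx.1.1]
  exact ((T.image_f_delta_eventuallyEq hγ hγ₁).union EventuallyEq.rfl).trans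
    (EventuallyEq.of_eq hsplit.symm)

theorem phi_eventuallyEq (hγ : T.delta_s0 A ≤ γ) (hγ₁ : γ < omega1) :
    T.phi A =ᶠ[cofinite] T.perm γ '' A :=
  (T.image_perm_eventuallyEq hγ hγ₁ (T.image_perm_sdiff_delta_eventuallyEq hγ hγ₁)).symm

theorem phi_eventuallyEq_iff :
    T.phi A =ᶠ[cofinite] T.phi B ↔ A =ᶠ[cofinite] B := by
  have hγ : max (T.delta_s0 A) (T.delta_s0 B) < omega1 := max_lt (T.delta_lt A) (T.delta_lt B)
  exact ((T.phi_eventuallyEq (le_max_left _ _) hγ).congr_left.trans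
    (T.phi_eventuallyEq (le_max_right _ _) hγ).congr_right).trans
    (T.perm_bijective hγ).injective.image_eventuallyEq_cofinite_iff

theorem phi_union : T.phi (A ∪ B) =ᶠ[cofinite] (T.phi A ∪ T.phi B : Set ℕ) := by
  have hγ : max (T.delta_s0 (A ∪ B)) (max (T.delta_s0 A) (T.delta_s0 B)) < omega1 :=
    max_lt (T.delta_lt _) (max_lt (T.delta_lt A) (T.delta_lt B))
  refine (T.phi_eventuallyEq (le_max_left _ _) hγ).trans ?_
  rw [image_union]
  exact ((T.phi_eventuallyEq ((le_max_left _ _).trans (le_max_right _ _)) hγ).union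
    (T.phi_eventuallyEq ((le_max_right _ _).trans (le_max_right _ _)) hγ)).symm

theorem phi_compl : T.phi Aᶜ =ᶠ[cofinite] (T.phi A)ᶜ := by
  have hγ : max (T.delta_s0 Aᶜ) (T.delta_s0 A) < omega1 := max_lt (T.delta_lt _) (T.delta_lt A)
  refine (T.phi_eventuallyEq (le_max_left _ _) hγ).trans ?_
  rw [image_compl_eq (T.perm_bijective hγ)]
  exact (T.phi_eventuallyEq (le_max_right _ _) hγ).compl.symm

theorem exists_phi_eventuallyEq (B : Set ℕ) : ∃ A, T.phi A =ᶠ[cofinite] B := by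
  set α := T.delta_s0 B
  refine ⟨T.perm α ⁻¹' B, ?_⟩
  have hγ : max α (T.delta_s0 (T.perm α ⁻¹' B)) < omega1 := max_lt (T.delta_lt B) (T.delta_lt _)
  have hα := le_max_left α (T.delta_s0 (T.perm α ⁻¹' B))
  refine (T.phi_eventuallyEq (le_max_right _ _) hγ).trans <|
    (T.image_perm_eventuallyEq hα hγ ?_).trans <|
    EventuallyEq.of_eq (image_preimage_eq B (T.perm_bijective (T.delta_lt B)).surjective)
  rw [T.preimage_perm_sdiff]
  exact T.image_perm_sdiff_delta_eventuallyEq hα hγ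

noncomputable def toPωFinAuto : PωFinAuto where
  Φ := T.phi
  congr _ _ h := eqStar_iff_eventuallyEq.mpr (T.phi_eventuallyEq_iff.mpr
    (eqStar_iff_eventuallyEq.mp h))
  inj _ _ h := eqStar_iff_eventuallyEq.mpr (T.phi_eventuallyEq_iff.mp
    (eqStar_iff_eventuallyEq.mp h))
  surj B := (T.exists_phi_eventuallyEq B).imp fun _ => eqStar_iff_eventuallyEq.mpr
  map_union _ _ := eqStar_iff_eventuallyEq.mpr T.phi_union
  map_compl _ := eqStar_iff_eventuallyEq.mpr T.phi_compl

theorem phi_eventuallyEq_image_of_subset (hα : α < omega1) (hA : A ⊆ T.D α) :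
    T.phi A =ᶠ[cofinite] T.f α '' A := by
  have hγ : max α (T.delta_s0 A) < omega1 := max_lt hα (T.delta_lt A)
  rw [← T.image_perm_of_subset hA]
  exact (T.phi_eventuallyEq (le_max_right _ _) hγ).trans
    (T.image_perm_eventuallyEq_of_subset (le_max_left _ _) hγ hA)

variable {h : ℕ → ℕ}

theorem eventually_f_eq_of_phi_eventuallyEq_image {dom : Set ℕ} (hdom : domᶜ.Finite)
    (hinj : InjOn h dom) (hphi : ∀ A, T.phi A =ᶠ[cofinite] h '' A) (hα : α < omega1) :
    ∀ᶠ x in cofinite, x ∈ T.D α → T.f α x = h x := by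
  set S := {x | x ∈ T.D α ∧ x ∈ dom ∧ T.f α x ≠ h x}
  have hS : S.Finite := by
    by_contra hS
    obtain ⟨A, hAS, hA, hdisj⟩ := exists_infinite_subset_disjoint_image hS
      ((T.bijOn α hα).injOn.mono fun _ hx => hx.1) (hinj.mono fun _ hx => hx.2.1)
      fun _ hx => hx.2.2
    have hAD : A ⊆ T.D α := fun _ hx => (hAS hx).1
    exact hA (Set.Finite.of_finite_image
      (((T.phi_eventuallyEq_image_of_subset hα hAD).symm.trans (hphi A)).finite_of_disjoint hdisj)
      ((T.bijOn α hα).injOn.mono hAD))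
  filter_upwards [hS.eventually_cofinite_notMem, hdom.eventually_cofinite_notMem]
    with x hxS hxdom hxα
  by_contra hne
  exact hxS ⟨hxα, not_not.mp hxdom, hne⟩

theorem eventually_notMem_of_disjoint_image
    (hagree : ∀ᶠ x in cofinite, x ∈ T.D γ → T.f γ x = h x) (hA : Disjoint (h '' A) A)
    (hγ : T.delta_s0 A ≤ γ) (hγ₁ : γ < omega1) :
    ∀ᶠ x in cofinite, x ∈ T.D γ → x ∉ T.D (T.delta_s0 A) → x ∉ A := by
  set P := (T.D γ \ T.D (T.delta_s0 A)) ∩ A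
  have hPh : P =ᶠ[cofinite] h '' P :=
    (T.image_f_delta_eventuallyEq hγ hγ₁).symm.trans
      (image_eventuallyEq_cofinite_of_eventually_eq (hagree.mono fun _ h hx => h hx.1.1))
  have hP : P.Finite := hPh.finite_of_disjoint
    (disjoint_of_subset (image_mono inter_subset_right) inter_subset_right hA).symm
  filter_upwards [hP.eventually_cofinite_notMem] with x hx hxγ hxδ hxA
  exact hx ⟨⟨hxγ, hxδ⟩, hxA⟩

theorem not_isTrivial_phi : ¬ IsTrivial T.phi := by
  rintro ⟨h, dom, hdom, -, hinj, htriv⟩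
  have hagree : ∀ α < omega1, ∀ᶠ x in cofinite, x ∈ T.D α → T.f α x = h x := fun α =>
    T.eventually_f_eq_of_phi_eventuallyEq_image hdom hinj fun A =>
      (eqStar_iff_eventuallyEq.mp (htriv A)).trans (image_inter_eventuallyEq_image hdom A)
  obtain ⟨A, hcover, hdisj⟩ := exists_fin_three_cover_disjoint_image
    (W := dom ∩ {x | h x ≠ x}) (hinj.mono inter_subset_left) fun _ hx => hx.2
  set β := Finset.univ.sup fun i => T.delta_s0 (A i)
  have hβ : β < omega1 := (Finset.sup_lt_iff (bot_le.trans_lt (T.delta_lt ∅))).mpr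
    fun i _ => T.delta_lt (A i)
  have hα : Order.succ β < omega1 :=
    (Cardinal.isSuccLimit_ord (Cardinal.aleph0_le_aleph 1)).succ_lt hβ
  have hthin : ∀ i, ∀ᶠ x in cofinite, x ∈ T.D (Order.succ β) → x ∉ T.D β → x ∉ A i := by
    intro i
    have hδβ : T.delta_s0 (A i) ≤ β :=
      Finset.le_sup (f := fun i => T.delta_s0 (A i)) (Finset.mem_univ i)
    filter_upwards [T.eventually_notMem_of_disjoint_image (hagree _ hα) (hdisj i)
      (hδβ.trans (Order.le_succ β)) hα, T.eventually_mem_of_le hδβ hβ]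
      with x hthin hsub hxα hxβ using hthin hxα fun hxδ => hxβ (hsub hxδ)
  have hsub : ∀ᶠ x in cofinite, x ∈ T.D (Order.succ β) → x ∈ T.D β := by
    filter_upwards [eventually_all.mpr hthin, hagree _ hα, hdom.eventually_cofinite_notMem]
      with x hthin hfx hxdom hxα
    by_contra hxβ
    have hmoved : h x ≠ x := hfx hxα ▸ T.fixedPointFree _ hα x hxα
    obtain ⟨i, hi⟩ := mem_iUnion.mp (hcover ⟨not_not.mp hxdom, hmoved⟩)
    exact hthin i hxα hxβ hi
  exact T.diff_infinite β _ (Order.lt_succ β) hα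
    ((eventually_cofinite.mp hsub).subset fun _ hx himp => hx.2 (himp hx.1))

end BowtieFn

/-- If there exists a bowtie of functions, then there exists a
nontrivial automorphism of `P(ω)/Fin`. -/
theorem bowtie_implies_nontrivial_automorphism (h : Nonempty BowtieFn) :
    ∃ F : PωFinAuto, ¬ IsTrivial F.Φ := by
  obtain ⟨T⟩ := h
  exact ⟨T.toPωFinAuto, T.not_isTrivial_phi⟩
end

section
/- Let ⟨f_α : α < ω₁⟩ be a bowtie of functions with domains D_α, and let F be the associated map on subsets of ℕ. Then for every A ⊆ ℕ and every ordinal δ with δ_A ≤ δ < ω₁, one has F(A) =* f_δ[A ∩ D_δ] ∪ (A \ D_δ). -/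
open Set

/-- `δ` witnesses condition (iii) of the bowtie definition for the set `A`. -/
def BowtieFn.IsWitness (B : BowtieFn) (A : Set ℕ) (δ : Ordinal) : Prop :=
  δ < omega1 ∧ ∀ α, δ ≤ α → α < omega1 →
    EqStar (B.f α '' ((B.D α \ B.D δ) ∩ A)) ((B.D α \ B.D δ) ∩ A) ∧
    EqStar (B.f α '' ((B.D α \ B.D δ) \ A)) ((B.D α \ B.D δ) \ A)

/-- `δ_A` : the least ordinal witnessing condition (iii) for `A`. -/
noncomputable def BowtieFn.delta (B : BowtieFn) (A : Set ℕ) : Ordinal :=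
  sInf {δ | B.IsWitness A δ}

/-- The map `F` associated to a bowtie of functions:
`F(A) = f_{δ_A}[A ∩ D_{δ_A}] ∪ (A \ D_{δ_A})`. -/
noncomputable def BowtieFn.F (B : BowtieFn) (A : Set ℕ) : Set ℕ :=
  B.f (B.delta A) '' (A ∩ B.D (B.delta A)) ∪ (A \ B.D (B.delta A))

lemma eqStar_refl (A : Set ℕ) : EqStar A A := by simp [EqStar]

lemma eqStar_symm {A B : Set ℕ} (h : EqStar A B) : EqStar B A := by
  unfold EqStar at *; rwa [Set.union_comm]

lemma eqStar_trans {A B C : Set ℕ} (h1 : EqStar A B) (h2 : EqStar B C) : EqStar A C := by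
  apply (h1.union h2).subset
  intro x hx
  simp only [Set.mem_union, Set.mem_diff] at *
  tauto

lemma eqStar_union {A B C D : Set ℕ} (h1 : EqStar A B) (h2 : EqStar C D) :
    EqStar (A ∪ C) (B ∪ D) := by
  apply (h1.union h2).subset
  intro x hx
  simp only [Set.mem_union, Set.mem_diff] at *
  tauto

lemma eqStar_image {f : ℕ → ℕ} {X Y : Set ℕ} (h : EqStar X Y) :
    EqStar (f '' X) (f '' Y) := by
  apply (h.image f).subset
  rintro z (⟨⟨x, hx, rfl⟩, hz⟩ | ⟨⟨x, hx, rfl⟩, hz⟩)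
  · exact ⟨x, Or.inl ⟨hx, fun hY => hz ⟨x, hY, rfl⟩⟩, rfl⟩
  · exact ⟨x, Or.inr ⟨hx, fun hX => hz ⟨x, hX, rfl⟩⟩, rfl⟩

lemma eqStar_image_funs {f g : ℕ → ℕ} {S D : Set ℕ} (hS : S ⊆ D)
    (h : {x ∈ D | f x ≠ g x}.Finite) : EqStar (f '' S) (g '' S) := by
  apply ((h.image f).union (h.image g)).subset
  rintro z (⟨⟨x, hx, rfl⟩, hz⟩ | ⟨⟨x, hx, rfl⟩, hz⟩)
  · exact Or.inl ⟨x, ⟨hS hx, fun he => hz ⟨x, hx, he.symm⟩⟩, rfl⟩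
  · exact Or.inr ⟨x, ⟨hS hx, fun he => hz ⟨x, hx, he⟩⟩, rfl⟩

/-- for every `A ⊆ ℕ` and every `δ` with `δ_A ≤ δ < ω₁`,
`F(A) =* f_δ[A ∩ D_δ] ∪ (A \ D_δ)`. -/
theorem bowtie_F_eqStar_at_larger_index (B : BowtieFn) (A : Set ℕ)
    (δ : Ordinal) (hδ₁ : B.delta A ≤ δ) (hδ₂ : δ < omega1) :
    EqStar (B.F A) (B.f δ '' (A ∩ B.D δ) ∪ (A \ B.D δ)) := by

  rcases eq_or_lt_of_le hδ₁ with heq | hlt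
  · subst heq
    exact eqStar_refl _
  · have hne : {d | B.IsWitness A d}.Nonempty := by
      obtain ⟨d, hd⟩ := B.guess A
      exact ⟨d, hd⟩
    have hw : B.IsWitness A (B.delta A) := csInf_mem hne
    have hS1 : (B.D (B.delta A) \ B.D δ).Finite := B.sub _ δ hlt hδ₂
    have hbad := B.coherent (B.delta A) δ hδ₁ hδ₂
    have hwit := (hw.2 δ hδ₁ hδ₂).1
    set δ₀ := B.delta A with hδ₀
    -- Step 1: images under f δ₀ and f δ of A ∩ D δ₀ agree mod finite
    have E1 : EqStar (B.f δ₀ '' (A ∩ B.D δ₀)) (B.f δ '' (A ∩ B.D δ₀)) :=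
      eqStar_image_funs Set.inter_subset_right hbad
    have E2 : EqStar (A ∩ B.D δ₀) (A ∩ B.D δ₀ ∩ B.D δ) := by
      apply hS1.subset
      intro x hx
      simp only [Set.mem_union, Set.mem_diff, Set.mem_inter_iff] at *
      tauto
    have E3 : EqStar (B.f δ₀ '' (A ∩ B.D δ₀)) (B.f δ '' (A ∩ B.D δ₀ ∩ B.D δ)) :=
      eqStar_trans E1 (eqStar_image E2)
    have hsplit : A \ B.D δ₀ = ((B.D δ \ B.D δ₀) ∩ A) ∪ (A \ (B.D δ₀ ∪ B.D δ)) := by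
      ext x
      simp only [Set.mem_union, Set.mem_diff, Set.mem_inter_iff]
      tauto
    have E4 : EqStar (A \ B.D δ₀)
        ((B.f δ '' ((B.D δ \ B.D δ₀) ∩ A)) ∪ (A \ (B.D δ₀ ∪ B.D δ))) := by
      rw [hsplit]
      exact eqStar_union (eqStar_symm hwit) (eqStar_refl _)
    have E5 : (B.f δ '' (A ∩ B.D δ₀ ∩ B.D δ)) ∪ (B.f δ '' ((B.D δ \ B.D δ₀) ∩ A))
        = B.f δ '' (A ∩ B.D δ) := by
      have hU : (A ∩ B.D δ₀ ∩ B.D δ) ∪ ((B.D δ \ B.D δ₀) ∩ A) = A ∩ B.D δ := by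
        ext x
        simp only [Set.mem_union, Set.mem_diff, Set.mem_inter_iff]
        tauto
      rw [← Set.image_union, hU]
    have E6 : EqStar (A \ (B.D δ₀ ∪ B.D δ)) (A \ B.D δ) := by
      apply hS1.subset
      intro x hx
      simp only [Set.mem_union, Set.mem_diff] at *
      tauto
    have Emain : EqStar (B.f δ₀ '' (A ∩ B.D δ₀) ∪ (A \ B.D δ₀))
        (B.f δ '' (A ∩ B.D δ) ∪ (A \ B.D δ)) := by
      refine eqStar_trans (eqStar_union E3 E4) ?_
      have : B.f δ '' (A ∩ B.D δ₀ ∩ B.D δ) ∪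
          ((B.f δ '' ((B.D δ \ B.D δ₀) ∩ A)) ∪ (A \ (B.D δ₀ ∪ B.D δ)))
          = B.f δ '' (A ∩ B.D δ) ∪ (A \ (B.D δ₀ ∪ B.D δ)) := by
        rw [← Set.union_assoc, E5]
      rw [this]
      exact eqStar_union (eqStar_refl _) E6
    exact Emain
end

section
/- Let ⟨f_α : α < ω₁⟩ be a bowtie of functions with domains D_α, and let F be the associated map on subsets of ℕ. For a free (nonprincipal) ultrafilter u on ℕ, the following are equivalent: (a) for every A ∈ u, F(A) ∈ u; (b) D_α ∉ u for every α < ω₁. That is, the fixed points of the induced autohomeomorphism of the space of free ultrafilters are exactly the free ultrafilters avoiding all the sets D_α. -/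
open Set

/-!
If no `D_α` lies in `u`, then `F(A) ⊇ A \ D_{δ_A} ∈ u`. Conversely, let `γ` be least with
`D_γ ∈ u`. An injective fixed-point-free map admits a greedy 3-colouring in which `x` and
`f_γ x` get different colours, so some colour class `A ⊆ D_γ` lies in `u` and `f_γ[A]` misses
`A`. If `δ_A < γ`, condition (iii) at `γ` makes `A \ D_{δ_A}`, a member of `u`, finite. If
`γ ≤ δ_A`, then `D_{δ_A} ∈ u`, so `F(A) ∈ u` puts `f_{δ_A}[A] ∩ A` in `u`, while
coherence (ii) makes that set finite.
-/

noncomputable def greedyColoring (r : ℕ → ℕ → Prop) (k : ℕ) (n : ℕ) : Fin (k + 1) :=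
  Classical.epsilon fun i ↦ ∀ m < n, r m n → greedyColoring r k m ≠ i

theorem greedyColoring_ne {r : ℕ → ℕ → Prop} {k : ℕ}
    (hr : ∀ n, {m | m < n ∧ r m n}.encard ≤ k) {m n : ℕ} (hmn : m < n) (h : r m n) :
    greedyColoring r k m ≠ greedyColoring r k n := by
  have hfree : ∃ i, ∀ m < n, r m n → greedyColoring r k m ≠ i := by
    by_contra! hall
    have huniv : (univ : Set (Fin (k + 1))) ⊆ greedyColoring r k '' {m | m < n ∧ r m n} :=
      fun i _ ↦ let ⟨m, hm, hr, he⟩ := hall i; ⟨m, ⟨hm, hr⟩, he⟩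
    have := (encard_le_encard huniv).trans ((encard_image_le _ _).trans (hr n))
    simp only [encard_univ, ENat.card_eq_coe_fintype_card, Fintype.card_fin] at this
    norm_cast at this
    omega
  rw [greedyColoring.eq_1 r k n]
  exact Classical.epsilon_spec hfree m hmn h

theorem exists_coloring_image_ne {D : Set ℕ} {f : ℕ → ℕ} (hinj : InjOn f D)
    (hfix : ∀ x ∈ D, f x ≠ x) : ∃ c : ℕ → Fin 3, ∀ x ∈ D, c (f x) ≠ c x := by
  set r : ℕ → ℕ → Prop := fun m n ↦ (m ∈ D ∧ f m = n) ∨ (n ∈ D ∧ f n = m)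
  have hr : ∀ n, {m | m < n ∧ r m n}.encard ≤ 2 := by
    intro n
    have hsub : {m | m < n ∧ r m n} ⊆ {m | m ∈ D ∧ f m = n} ∪ {f n} := by
      rintro m ⟨-, hm | ⟨-, rfl⟩⟩
      exacts [Or.inl hm, Or.inr rfl]
    have hpre : {m | m ∈ D ∧ f m = n}.encard ≤ 1 :=
      encard_le_one_iff.2 fun a b ha hb ↦ hinj ha.1 hb.1 (ha.2.trans hb.2.symm)
    calc _ ≤ _ := encard_le_encard hsub
      _ ≤ _ := encard_union_le _ _
      _ ≤ 1 + 1 := add_le_add hpre (encard_singleton _).le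
  refine ⟨greedyColoring r 2, fun x hx ↦ ?_⟩
  rcases (hfix x hx).lt_or_gt with hlt | hgt
  · exact greedyColoring_ne hr hlt (Or.inr ⟨hx, rfl⟩)
  · exact (greedyColoring_ne hr hgt (Or.inl ⟨hx, rfl⟩)).symm

theorem Ultrafilter.exists_subset_mem_disjoint_image (u : Ultrafilter ℕ) {D : Set ℕ}
    {f : ℕ → ℕ} (hD : D ∈ u) (hinj : InjOn f D) (hfix : ∀ x ∈ D, f x ≠ x) :
    ∃ A ∈ u, A ⊆ D ∧ Disjoint (f '' A) A := by
  obtain ⟨c, hc⟩ := exists_coloring_image_ne hinj hfix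
  obtain ⟨i, hi⟩ := (u.map c).eq_pure_of_finite
  have hci : c ⁻¹' {i} ∈ u := by
    change {i} ∈ u.map c; rw [hi]; exact rfl
  refine ⟨D ∩ c ⁻¹' {i}, Filter.inter_mem hD hci, inter_subset_left, ?_⟩
  rw [disjoint_left]
  rintro _ ⟨x, ⟨hxD, hxi⟩, rfl⟩ ⟨-, hfxi⟩
  exact hc x hxD (hfxi.trans hxi.symm)

theorem EqStar.finite_of_disjoint {f : ℕ → ℕ} {S : Set ℕ} (h : EqStar (f '' S) S)
    (hdisj : Disjoint (f '' S) S) : S.Finite :=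
  h.subset fun _ hx ↦ Or.inr ⟨hx, fun hfx ↦ hdisj.notMem_of_mem_left hfx hx⟩

namespace BowtieFn

theorem isWitness_delta (B : BowtieFn) (A : Set ℕ) : B.IsWitness A (B.delta A) :=
  csInf_mem (B.guess A)

theorem delta_lt_omega1 (B : BowtieFn) (A : Set ℕ) : B.delta A < omega1 :=
  (B.isWitness_delta A).1

theorem IsWitness.finite_diff {B : BowtieFn} {A : Set ℕ} {γ δ : Ordinal}
    (hw : B.IsWitness A δ) (hδγ : δ ≤ γ) (hγ : γ < omega1) (hA : A ⊆ B.D γ)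
    (hdisj : Disjoint (B.f γ '' A) A) : (A \ B.D δ).Finite := by
  have hS := (hw.2 γ hδγ hγ).1.finite_of_disjoint
    (hdisj.mono (image_mono inter_subset_right) inter_subset_right)
  exact hS.subset fun x hx ↦ ⟨⟨hA hx.1, hx.2⟩, hx.1⟩

theorem finite_image_inter_of_le (B : BowtieFn) {A : Set ℕ} {γ δ : Ordinal} (hγδ : γ ≤ δ)
    (hδ : δ < omega1) (hA : A ⊆ B.D γ) (hdisj : Disjoint (B.f γ '' A) A) :
    (B.f δ '' A ∩ A).Finite := by
  refine ((B.coherent γ δ hγδ hδ).image (B.f δ)).subset ?_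
  rintro _ ⟨⟨x, hxA, rfl⟩, hfxA⟩
  exact ⟨x, ⟨hA hxA, fun heq ↦ hdisj.notMem_of_mem_left ⟨x, hxA, heq⟩ hfxA⟩, rfl⟩

end BowtieFn

/-- for a free ultrafilter `u` on `ℕ`, `u` is a fixed point of the
map induced by `F` (i.e. `F` maps sets in `u` to sets in `u`) iff `u` avoids
every `D_α`. -/
theorem bowtie_F_fixed_ultrafilters (B : BowtieFn) (u : Ultrafilter ℕ)
    (hu : Filter.cofinite ≤ (u : Filter ℕ)) :
    (∀ A : Set ℕ, A ∈ u → B.F A ∈ u) ↔ ∀ α < omega1, B.D α ∉ u := by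
  have notMem_of_finite {s : Set ℕ} (hs : s.Finite) : s ∉ u :=
    fun hsu ↦ hs.infinite_compl (Filter.mem_cofinite.1 (hu hsu))
  have diff_mem {s t : Set ℕ} (hs : s ∈ u) (ht : t ∉ u) : s \ t ∈ u :=
    Filter.sdiff_mem hs (u.compl_mem_iff_notMem.2 ht)
  refine ⟨fun hF ↦ ?_, fun h A hA ↦ ?_⟩
  · by_contra! hex
    obtain ⟨γ, ⟨hγ, hγu⟩, hmin⟩ :=
      Ordinal.lt_wf.has_min {α | α < omega1 ∧ B.D α ∈ u} hex
    obtain ⟨A, hAu, hAD, hdisj⟩ := u.exists_subset_mem_disjoint_image hγu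
      (B.bijOn γ hγ).injOn (B.fixedPointFree γ hγ)
    set δ := B.delta A
    have hδ := B.delta_lt_omega1 A
    rcases lt_or_ge δ γ with hδγ | hγδ
    · have hδu : B.D δ ∉ u := fun h ↦ hmin δ ⟨hδ, h⟩ hδγ
      exact notMem_of_finite ((B.isWitness_delta A).finite_diff hδγ.le hγ hAD hdisj)
        (diff_mem hAu hδu)
    · have hδu : B.D δ ∈ u := by
        rcases hγδ.eq_or_lt with heq | hlt
        · rwa [← heq]
        · by_contra h
          exact notMem_of_finite (B.sub γ δ hlt hδ) (diff_mem hγu h)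
      have himg : B.f δ '' (A ∩ B.D δ) ∈ u :=
        (u.union_mem_iff.1 (hF A hAu)).resolve_right fun h ↦
          u.compl_notMem_iff.2 hδu (Filter.mem_of_superset h fun _ hx ↦ hx.2)
      exact notMem_of_finite (B.finite_image_inter_of_le hγδ hδ hAD hdisj)
        (Filter.inter_mem (Filter.mem_of_superset himg (image_mono inter_subset_left)) hAu)
  · exact Filter.mem_of_superset (diff_mem hA (h _ (B.delta_lt_omega1 A))) subset_union_right
end

section
/- Let ⟨I_n : n ≥ 3⟩ be the consecutive intervals of ℕ with |I_n| = n, min(I_3) = 0, and min(I_{n+1}) = max(I_n) + 1. Let α be a countable limit ordinal and let ⟨J_ξ : ξ < α⟩ be a sequence of subsets of ℕ such that J_η ⊆* J_ξ whenever ξ ≤ η < α, and such that for each ξ < α: |J_ξ ∩ I_n| ≥ 2 for all n ≥ 3; the set S_ξ = {n ≥ 3 : |J_ξ ∩ I_n| > 2} is infinite; and, letting s_ξ denote the unique increasing bijection from {3,4,5,…} onto S_ξ, |J_ξ ∩ I_{s_ξ(k)}| = k for all k ≥ 3. Suppose S is an infinite subset of {3,4,5,…} with S ⊆* S_ξ for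 every ξ < α, whose increasing enumeration s : {3,4,5,…} → S satisfies s_ξ(i) ≤ s(i) for all but finitely many i, for every ξ < α. Then there exists J ⊆ ℕ such that J ⊆* J_ξ for every ξ < α, |J ∩ I_n| ≥ 2 for all n ≥ 3, {n ≥ 3 : |J ∩ I_n| > 2} = S, and |J ∩ I_{s(i)}| = i for all i ≥ 3. -/
/-!
Since `a` is countable, the `J ξ` (`ξ < a`) are refined by a decreasing sequence
`K 0 ⊇ K 1 ⊇ ⋯`: every `J ξ` contains some `K m` and every `K m` almost contains some `J ξ`.
Let `r n = i` if `n = e i` and `r n = 2` otherwise (`blockSize`). Each `J ξ` has at least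
`r n` points in all but finitely many blocks `Iseg n`: for almost all `i` we have `e i ∈ S_ξ`
and `s ξ i ≤ e i`, so `e i = s ξ j` with `j ≥ i`. Hence so does each `K m`. Now diagonalise:
in `Iseg n` take `r n` points of `K (g n)`, where `g n ≤ n` is the largest index for which
`K (g n)` still has `r n` points there; `g n → ∞`, so the union of these choices is almost
contained in every `K m`.
-/

open Set

/-- The consecutive intervals `I_n` (for `n ≥ 3`) with `|I_n| = n`,
`min I_3 = 0` and `min I_{n+1} = max I_n + 1`: explicitly,
`I_n = [n(n-1)/2 - 3, n(n+1)/2 - 3)`. -/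
def Iseg (n : ℕ) : Set ℕ := Set.Ico (n * (n - 1) / 2 - 3) (n * (n + 1) / 2 - 3)

open Filter Function

theorem countable_Iio_of_lt_omega1 {a : Ordinal} (ha : a < omega1) : (Iio a).Countable := by
  rw [← Cardinal.le_aleph0_iff_set_countable, Cardinal.mk_Iio_ordinal, Cardinal.lift_le_aleph0,
    ← Cardinal.lt_aleph_one_iff]
  exact Cardinal.lt_ord.mp ha

theorem Iseg_finite (n : ℕ) : (Iseg n).Finite := finite_Ico _ _

theorem ncard_Iseg {n : ℕ} (hn : 3 ≤ n) : (Iseg n).ncard = n := by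
  obtain ⟨k, rfl⟩ : ∃ k, n = k + 1 := ⟨n - 1, by omega⟩
  have htri : (k + 1) * (k + 1 + 1) / 2 = (k + 1) * k / 2 + (k + 1) := by
    rw [show (k + 1) * (k + 1 + 1) = (k + 1) * k + (k + 1) * 2 by ring,
      Nat.add_mul_div_right _ _ two_pos]
  have hlow : k + 1 ≤ (k + 1) * k / 2 := by
    rw [Nat.le_div_iff_mul_le two_pos]
    exact Nat.mul_le_mul_left _ (by omega)
  rw [Iseg, ← Finset.coe_Ico, ncard_coe_finset, Nat.card_Ico, htri, Nat.add_sub_cancel]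
  omega

theorem pairwise_disjoint_Iseg : Pairwise (Disjoint on Iseg) := by
  refine (pairwise_disjoint_on _).mpr fun p n hpn => ?_
  have hmul : p * (p + 1) ≤ n * (n - 1) :=
    (Nat.mul_le_mul (by omega) (by omega) : p * (p + 1) ≤ (n - 1) * n).trans_eq (Nat.mul_comm _ _)
  have hdiv := Nat.div_le_div_right (c := 2) hmul
  rw [Iseg, Iseg, Set.Ico_disjoint_Ico]
  omega

theorem subStar_iUnion_of_eventually_subset {T : ℕ → Set ℕ} (hT : ∀ n, (T n).Finite)
    {B : Set ℕ} (hTB : ∀ᶠ n in cofinite, T n ⊆ B) : SubStar (⋃ n, T n) B := by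
  refine ((eventually_cofinite.mp hTB).biUnion fun n _ => hT n).subset fun x ⟨hxT, hxB⟩ => ?_
  obtain ⟨n, hxn⟩ := mem_iUnion.mp hxT
  exact mem_biUnion (fun hnB => hxB (hnB hxn)) hxn

section Blocks

variable {I : ℕ → Set ℕ}

theorem eventually_disjoint_of_finite (hI : Pairwise (Disjoint on I)) {F : Set ℕ}
    (hF : F.Finite) : ∀ᶠ n in cofinite, Disjoint F (I n) := by
  have hx : ∀ x ∈ F, ∀ᶠ n in cofinite, x ∉ I n := fun x _ =>
    eventually_cofinite.mpr <| Subsingleton.finite fun m hm n hn => by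
      by_contra hmn
      exact disjoint_left.mp (hI hmn) (not_not.mp hm) (not_not.mp hn)
  filter_upwards [(eventually_all_finite hF).mpr hx] with n hn
  exact disjoint_left.mpr hn

theorem eventually_ncard_inter_le_of_subStar (hI : Pairwise (Disjoint on I))
    (hIfin : ∀ n, (I n).Finite) {A B : Set ℕ} (hAB : SubStar A B) :
    ∀ᶠ n in cofinite, (A ∩ I n).ncard ≤ (B ∩ I n).ncard := by
  filter_upwards [eventually_disjoint_of_finite hI hAB] with n hn
  refine ncard_le_ncard (fun x ⟨hxA, hxI⟩ => ⟨?_, hxI⟩) ((hIfin n).inter_of_right B)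
  by_contra hxB
  exact disjoint_left.mp hn ⟨hxA, hxB⟩ hxI

theorem iUnion_inter_of_subset_of_pairwise_disjoint (hI : Pairwise (Disjoint on I))
    {T : ℕ → Set ℕ} (hTI : ∀ n, T n ⊆ I n) (n : ℕ) : (⋃ k, T k) ∩ I n = T n := by
  refine Subset.antisymm (fun x ⟨hxT, hxI⟩ => ?_) fun x hx =>
    ⟨mem_iUnion_of_mem n hx, hTI n hx⟩
  obtain ⟨k, hxk⟩ := mem_iUnion.mp hxT
  obtain rfl : k = n := by
    by_contra hkn
    exact disjoint_left.mp (hI hkn) (hTI k hxk) hxI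
  exact hxk

theorem exists_forall_subStar_ncard_inter_eq (hI : Pairwise (Disjoint on I))
    (hIfin : ∀ n, (I n).Finite) {K : ℕ → Set ℕ} (hK : Antitone K) {r : ℕ → ℕ}
    (hr : ∀ m, ∀ᶠ n in cofinite, r n ≤ (K m ∩ I n).ncard) :
    ∃ X : Set ℕ, (∀ m, SubStar X (K m)) ∧
      ∀ n, (X ∩ I n).ncard = min (r n) (I n).ncard := by
  classical
  set g : ℕ → ℕ := fun n => Nat.findGreatest (fun m => r n ≤ (K m ∩ I n).ncard) n
  have hg : ∀ m, ∀ᶠ n in cofinite, m ≤ g n ∧ r n ≤ (K (g n) ∩ I n).ncard := by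
    intro m
    rw [Nat.cofinite_eq_atTop] at hr ⊢
    filter_upwards [hr m, eventually_ge_atTop m] with n hrn hmn
    exact ⟨Nat.le_findGreatest hmn hrn,
      Nat.findGreatest_spec (P := fun m => r n ≤ (K m ∩ I n).ncard) hmn hrn⟩
  have hT : ∀ n, ∃ T ⊆ I n, T.ncard = min (r n) (I n).ncard ∧
      (r n ≤ (K (g n) ∩ I n).ncard → T ⊆ K (g n)) := by
    intro n
    by_cases hn : r n ≤ (K (g n) ∩ I n).ncard
    · obtain ⟨T, hTK, hTcard⟩ := exists_subset_card_eq hn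
      refine ⟨T, hTK.trans inter_subset_right, ?_, fun _ => hTK.trans inter_subset_left⟩
      rw [hTcard, min_eq_left (hn.trans (ncard_le_ncard inter_subset_right (hIfin n)))]
    · obtain ⟨T, hTI, hTcard⟩ := exists_subset_card_eq (min_le_right (r n) (I n).ncard)
      exact ⟨T, hTI, hTcard, fun h => absurd h hn⟩
  choose T hTI hTcard hTK using hT
  refine ⟨⋃ n, T n, fun m => subStar_iUnion_of_eventually_subset
    (fun n => (hIfin n).subset (hTI n)) ?_, fun n => ?_⟩
  · filter_upwards [hg m] with n ⟨hmg, hrn⟩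
    exact (hTK n hrn).trans (hK hmg)
  · rw [iUnion_inter_of_subset_of_pairwise_disjoint hI hTI, hTcard]

end Blocks

theorem exists_antitone_of_countable_subStar {ι : Type*} [LinearOrder ι] {C : Set ι}
    (hC : C.Countable) (hne : C.Nonempty) {J : ι → Set ℕ}
    (hJ : ∀ ξ ∈ C, ∀ η ∈ C, ξ ≤ η → SubStar (J η) (J ξ)) :
    ∃ K : ℕ → Set ℕ, Antitone K ∧ (∀ ξ ∈ C, ∃ m, K m ⊆ J ξ) ∧
      ∀ m, ∃ ξ ∈ C, SubStar (J ξ) (K m) := by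
  obtain ⟨ν, rfl⟩ := hC.exists_eq_range hne
  refine ⟨fun m => ⋂ j ∈ Finset.Iic m, J (ν j), fun m m' hmm' => ?_, ?_, fun m => ?_⟩
  · exact biInter_subset_biInter_left fun j hj => Finset.Iic_subset_Iic.mpr hmm' hj
  · rintro _ ⟨m, rfl⟩
    exact ⟨m, biInter_subset_of_mem (Finset.mem_Iic.mpr le_rfl)⟩
  · obtain ⟨i, hi, hmax⟩ := Finset.exists_mem_eq_sup' Finset.nonempty_Iic ν
    refine ⟨ν i, mem_range_self i, ((Finset.Iic m).finite_toSet.biUnion fun j hj =>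
      hJ _ (mem_range_self j) _ (mem_range_self i) ?_).subset fun x ⟨hxi, hx⟩ => ?_⟩
    · exact hmax ▸ Finset.le_sup' ν hj
    · obtain ⟨j, hj, hxj⟩ : ∃ j ∈ Finset.Iic m, x ∉ J (ν j) := by simpa using hx
      exact mem_biUnion hj ⟨hxi, hxj⟩

theorem finite_setOf_lt_comp_of_enumerations {D S T : Set ℕ} {c s e : ℕ → ℕ}
    (hs : StrictMonoOn s D) (hsT : SurjOn s D T) (hc : ∀ k ∈ D, c (s k) = k)
    (he : InjOn e D) (heS : MapsTo e D S) (hST : SubStar S T)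
    (hse : {i | i ∈ D ∧ ¬ s i ≤ e i}.Finite) : {i | i ∈ D ∧ c (e i) < i}.Finite := by
  have hout : {i | i ∈ D ∧ e i ∉ T}.Finite :=
    Finite.of_finite_image (hST.subset <| image_subset_iff.mpr fun i hi => ⟨heS hi.1, hi.2⟩)
      (he.mono fun i hi => hi.1)
  refine (hout.union hse).subset fun i ⟨hiD, hci⟩ => ?_
  by_contra hgood
  simp only [mem_union, mem_ofPred_eq, not_or, not_and, not_not] at hgood
  obtain ⟨j, hjD, hj⟩ := hsT (hgood.1 hiD)
  have hij : i ≤ j := hs.le_iff_le hiD hjD |>.mp (hj ▸ hgood.2 hiD)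
  rw [← hj, hc j hjD] at hci
  omega

theorem StrictMonoOn.Ici_id_le {k : ℕ} {e : ℕ → ℕ} (he : StrictMonoOn e (Ici k))
    (hk : k ≤ e k) {i : ℕ} (hi : k ≤ i) : i ≤ e i := by
  induction i, hi using Nat.le_induction with
  | base => exact hk
  | succ i hki ih => exact ih.trans_lt (he hki (hki.trans i.le_succ) i.lt_succ_self)

open Classical in
noncomputable def blockSize (S : Set ℕ) (e : ℕ → ℕ) (n : ℕ) : ℕ :=
  if n ∈ S then invFunOn e (Ici 3) n else 2

section BlockSize

variable {S : Set ℕ} {e : ℕ → ℕ}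

theorem blockSize_apply (he : BijOn e (Ici 3) S) {i : ℕ} (hi : 3 ≤ i) :
    blockSize S e (e i) = i := by
  rw [blockSize, if_pos (he.mapsTo hi), he.invOn_invFunOn.1 hi]

theorem three_le_blockSize_of_mem (he : BijOn e (Ici 3) S) {n : ℕ} (hn : n ∈ S) :
    3 ≤ blockSize S e n := by
  obtain ⟨i, hi, rfl⟩ := he.surjOn hn
  rw [blockSize_apply he hi]
  exact hi

theorem blockSize_of_not_mem {n : ℕ} (hn : n ∉ S) : blockSize S e n = 2 := if_neg hn

theorem two_le_blockSize (he : BijOn e (Ici 3) S) (n : ℕ) : 2 ≤ blockSize S e n := by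
  by_cases hn : n ∈ S
  · exact (three_le_blockSize_of_mem he hn).trans' (by norm_num)
  · exact (blockSize_of_not_mem hn).ge

theorem two_lt_blockSize_iff (he : BijOn e (Ici 3) S) {n : ℕ} :
    2 < blockSize S e n ↔ n ∈ S := by
  refine ⟨fun h => ?_, fun hn => three_le_blockSize_of_mem he hn⟩
  by_contra hn
  exact h.ne' (blockSize_of_not_mem hn)

theorem blockSize_le (he : BijOn e (Ici 3) S) (hmono : StrictMonoOn e (Ici 3)) (hS : S ⊆ Ici 3)
    {n : ℕ} (hn : 3 ≤ n) : blockSize S e n ≤ n := by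
  by_cases hnS : n ∈ S
  · obtain ⟨i, hi, rfl⟩ := he.surjOn hnS
    rw [blockSize_apply he hi]
    exact hmono.Ici_id_le (hS (he.mapsTo (mem_Ici.mpr le_rfl))) hi
  · exact (blockSize_of_not_mem hnS).trans_le (hn.trans' (by norm_num))

theorem eventually_blockSize_le (he : BijOn e (Ici 3) S) {T : Set ℕ} {c t : ℕ → ℕ}
    (hc : ∀ n, 3 ≤ n → 2 ≤ c n) (ht : StrictMonoOn t (Ici 3)) (htT : SurjOn t (Ici 3) T)
    (hct : ∀ k, 3 ≤ k → c (t k) = k) (hST : SubStar S T)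
    (hte : {i | 3 ≤ i ∧ ¬ t i ≤ e i}.Finite) :
    ∀ᶠ n in cofinite, blockSize S e n ≤ c n := by
  have hbad := finite_setOf_lt_comp_of_enumerations ht htT hct he.injOn he.mapsTo hST hte
  refine eventually_cofinite.mpr (((finite_Iio 3).union (hbad.image e)).subset fun n hn => ?_)
  by_cases hnS : n ∈ S
  · obtain ⟨i, hi, rfl⟩ := he.surjOn hnS
    exact Or.inr ⟨i, ⟨hi, by simpa [blockSize_apply he hi] using hn⟩, rfl⟩
  · refine Or.inl (mem_Iio.mpr (not_le.mp fun h3n => hn ?_))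
    simpa [blockSize_of_not_mem hnS] using hc n h3n

end BlockSize

theorem limit_step_J_general (a : Ordinal) (halim : Order.IsSuccLimit a) (ha : a < omega1)
    (J : Ordinal → Set ℕ) (s : Ordinal → ℕ → ℕ)
    (hJmono : ∀ ξ η, ξ ≤ η → η < a → SubStar (J η) (J ξ))
    (hJ2 : ∀ ξ < a, ∀ n, 3 ≤ n → 2 ≤ (J ξ ∩ Iseg n).ncard)
    (hsmono : ∀ ξ < a, StrictMonoOn (s ξ) (Set.Ici 3))
    (hsbij : ∀ ξ < a, Set.BijOn (s ξ) (Set.Ici 3)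
      {n | 3 ≤ n ∧ 2 < (J ξ ∩ Iseg n).ncard})
    (hJcard : ∀ ξ < a, ∀ k, 3 ≤ k → (J ξ ∩ Iseg (s ξ k)).ncard = k)
    (S : Set ℕ) (hS3 : S ⊆ Set.Ici 3)
    (hSsub : ∀ ξ < a, SubStar S {n | 3 ≤ n ∧ 2 < (J ξ ∩ Iseg n).ncard})
    (e : ℕ → ℕ) (hemono : StrictMonoOn e (Set.Ici 3))
    (hebij : Set.BijOn e (Set.Ici 3) S)
    (hse : ∀ ξ < a, {i | 3 ≤ i ∧ ¬ s ξ i ≤ e i}.Finite) :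
    ∃ Jlim : Set ℕ,
      (∀ ξ < a, SubStar Jlim (J ξ)) ∧
      (∀ n, 3 ≤ n → 2 ≤ (Jlim ∩ Iseg n).ncard) ∧
      {n | 3 ≤ n ∧ 2 < (Jlim ∩ Iseg n).ncard} = S ∧
      ∀ i, 3 ≤ i → (Jlim ∩ Iseg (e i)).ncard = i := by
  obtain ⟨K, hK, hKJ, hJK⟩ :=
    exists_antitone_of_countable_subStar (countable_Iio_of_lt_omega1 ha) ⟨0, halim.pos⟩
      fun ξ _ η hη hξη => hJmono ξ η hξη hη
  have hKlarge : ∀ m, ∀ᶠ n in cofinite, blockSize S e n ≤ (K m ∩ Iseg n).ncard := by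
    intro m
    obtain ⟨ξ, hξ, hJξ⟩ := hJK m
    filter_upwards [eventually_blockSize_le hebij (hJ2 ξ hξ) (hsmono ξ hξ) (hsbij ξ hξ).surjOn
        (hJcard ξ hξ) (hSsub ξ hξ) (hse ξ hξ),
      eventually_ncard_inter_le_of_subStar pairwise_disjoint_Iseg Iseg_finite hJξ]
      with n h₁ h₂ using h₁.trans h₂
  obtain ⟨X, hXK, hXcard⟩ :=
    exists_forall_subStar_ncard_inter_eq pairwise_disjoint_Iseg Iseg_finite hK hKlarge
  have hcard : ∀ n, 3 ≤ n → (X ∩ Iseg n).ncard = blockSize S e n := fun n hn => by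
    rw [hXcard, ncard_Iseg hn, min_eq_left (blockSize_le hebij hemono hS3 hn)]
  refine ⟨X, fun ξ hξ => ?_, fun n hn => ?_, ?_, fun i hi => ?_⟩
  · obtain ⟨m, hm⟩ := hKJ ξ hξ
    exact (hXK m).subset (sdiff_subset_sdiff_right hm)
  · exact (hcard n hn).symm ▸ two_le_blockSize hebij n
  · ext n
    exact ⟨fun ⟨hn, h2⟩ => (two_lt_blockSize_iff hebij).mp (hcard n hn ▸ h2),
      fun hn => ⟨hS3 hn, (hcard n (hS3 hn)).symm ▸ (two_lt_blockSize_iff hebij).mpr hn⟩⟩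
  · rw [hcard _ (hS3 (hebij.mapsTo hi)), blockSize_apply hebij hi]

/-- the limit step of the construction of the sets `J_α`. -/
theorem limit_step_J (a : Ordinal) (halim : Order.IsSuccLimit a) (ha : a < omega1)
    (J : Ordinal → Set ℕ) (s : Ordinal → ℕ → ℕ)
    (hJmono : ∀ ξ η, ξ ≤ η → η < a → SubStar (J η) (J ξ))
    (hJ2 : ∀ ξ < a, ∀ n, 3 ≤ n → 2 ≤ (J ξ ∩ Iseg n).ncard)
    (hSinf : ∀ ξ < a, {n | 3 ≤ n ∧ 2 < (J ξ ∩ Iseg n).ncard}.Infinite)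
    (hsmono : ∀ ξ < a, StrictMonoOn (s ξ) (Set.Ici 3))
    (hsbij : ∀ ξ < a, Set.BijOn (s ξ) (Set.Ici 3)
      {n | 3 ≤ n ∧ 2 < (J ξ ∩ Iseg n).ncard})
    (hJcard : ∀ ξ < a, ∀ k, 3 ≤ k → (J ξ ∩ Iseg (s ξ k)).ncard = k)
    (S : Set ℕ) (hS3 : S ⊆ Set.Ici 3) (hSInf : S.Infinite)
    (hSsub : ∀ ξ < a, SubStar S {n | 3 ≤ n ∧ 2 < (J ξ ∩ Iseg n).ncard})
    (e : ℕ → ℕ) (hemono : StrictMonoOn e (Set.Ici 3))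
    (hebij : Set.BijOn e (Set.Ici 3) S)
    (hse : ∀ ξ < a, {i | 3 ≤ i ∧ ¬ s ξ i ≤ e i}.Finite) :
    ∃ Jlim : Set ℕ,
      (∀ ξ < a, SubStar Jlim (J ξ)) ∧
      (∀ n, 3 ≤ n → 2 ≤ (Jlim ∩ Iseg n).ncard) ∧
      {n | 3 ≤ n ∧ 2 < (Jlim ∩ Iseg n).ncard} = S ∧
      ∀ i, 3 ≤ i → (Jlim ∩ Iseg (e i)).ncard = i :=
  limit_step_J_general a halim ha J s hJmono hJ2 hsmono hsbij hJcard S hS3 hSsub e hemono hebij hse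
end
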